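/- Graph lemma for ∂-regular words: let M be a monomial (word) in letters x_{ij}, ∂_{ij} that is a regular product of cyclic monomials C(1)⋯C(m), each C(l) of the form x_{α₁i₁}⋯x_{α_k i_k}∂_{α₁i₂}⋯∂_{α_k i₁} with coverage at least 2. Then the capacity of M (number of diagonal ∂-factors) satisfies cap(M) ≤ deg(M) − cov(M), where deg(M) is the number of x-factors and cov(M) is the number of distinct indices appearing in M. -/

import Mathlib

/-- A letter of the alphabet `{x_{ij}, ∂_{ij}}`: `(true, i, j)` encodes `x_{ij}` and
`(false, i, j)` encodes `∂_{ij}`. A word (monomial) is a list of letters, written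
left to right; "to the right of a factor" means later in the list. -/
abbrev MonLetter := Bool × ℕ × ℕ

/-- The cyclic monomial `x_{α₁i₁}⋯x_{α_k i_k} ∂_{α₁i₂}⋯∂_{α_k i₁}` determined by the
index tuples `α, i : Fin k → ℕ` (the `∂`-indices are cyclically shifted). -/
def cycleWord (k : ℕ) (α i : Fin k → ℕ) : List MonLetter :=
  (List.ofFn fun t => ((true, α t, i t) : MonLetter)) ++
    (List.ofFn fun t : Fin k => ((false, α t, i (finRotate k t)) : MonLetter))

/-- `deg`: the number of `x`-factors of a monomial. -/
def degW (w : List MonLetter) : ℕ := (w.filter fun a => a.1).length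

/-- `cap` (capacity): the number of diagonal `∂`-factors `∂_{ii}` of a monomial. -/
def capW (w : List MonLetter) : ℕ :=
  (w.filter fun a => !a.1 && (a.2.1 == a.2.2)).length

/-- `cov` (coverage): the number of distinct indices appearing in a monomial. -/
def covW (w : List MonLetter) : ℕ :=
  ((w.map fun a => a.2.1) ++ (w.map fun a => a.2.2)).toFinset.card

/-- `∂`-regularity: for every factor `∂_{ij}` with `i ≠ j`, strictly more letters
`x_{ij}` than `∂_{ij}` occur to the right of it. -/
def DRegular (w : List MonLetter) : Prop :=
  ∀ p : Fin w.length, (w.get p).1 = false → (w.get p).2.1 ≠ (w.get p).2.2 →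
    (w.drop (p + 1)).count (false, (w.get p).2.1, (w.get p).2.2) <
      (w.drop (p + 1)).count (true, (w.get p).2.1, (w.get p).2.2)

/-- `x`-regularity: for every factor `x_{ij}` with `i ≠ j`, strictly more letters
`∂_{ij}` than `x_{ij}` occur to the left of it. -/
def XRegular (w : List MonLetter) : Prop :=
  ∀ p : Fin w.length, (w.get p).1 = true → (w.get p).2.1 ≠ (w.get p).2.2 →
    (w.take p).count (true, (w.get p).2.1, (w.get p).2.2) <
      (w.take p).count (false, (w.get p).2.1, (w.get p).2.2)

/-!
Since `deg = Σ k_l` and each cycle has `k_l = cap + (number of off-diagonal ∂-factors)`, it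
suffices to bound `cov` by the number of off-diagonal `∂`-factors. Read the cycles from left to
right. By `x`-regularity an off-diagonal `x_{αi}` of a cycle is preceded by some `∂_{αi}` in an
earlier cycle, so both its ends are old indices. Hence in the closed walk `i₁, α₁, i₂, α₂, …` of
the cycle, with all old indices identified, only off-diagonal `∂`-steps move, and a closed walk
through at least two points leaves each of them; so the new indices of the cycle are at most its
off-diagonal `∂`-factors.
-/

open Finset

def offDiagW (w : List MonLetter) : ℕ :=
  (w.filter fun a => !a.1 && !(a.2.1 == a.2.2)).length

def indexSet (w : List MonLetter) : Finset ℕ :=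
  ((w.map fun a => a.2.1) ++ (w.map fun a => a.2.2)).toFinset

lemma covW_eq_card_indexSet (w : List MonLetter) : covW w = #(indexSet w) := rfl

lemma indexSet_append (u v : List MonLetter) :
    indexSet (u ++ v) = indexSet u ∪ indexSet v := by
  ext; simp only [indexSet, List.map_append, List.mem_toFinset, List.mem_append, mem_union]
  tauto

lemma mem_indexSet_of_mem {a : MonLetter} {w : List MonLetter} (h : a ∈ w) :
    a.2.1 ∈ indexSet w ∧ a.2.2 ∈ indexSet w := by
  simp only [indexSet, List.mem_toFinset, List.mem_append, List.mem_map]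
  exact ⟨.inl ⟨a, h, rfl⟩, .inr ⟨a, h, rfl⟩⟩

lemma indexSet_cycleWord (k : ℕ) (α i : Fin k → ℕ) :
    indexSet (cycleWord k α i) = univ.image α ∪ univ.image i := by
  ext v
  simp only [indexSet, cycleWord, List.map_append, List.map_ofFn, List.toFinset_append,
    mem_union, List.mem_toFinset, List.mem_ofFn, mem_image, mem_univ, true_and,
    Function.comp_def]
  constructor
  · rintro ((⟨t, ht⟩ | ⟨t, ht⟩) | (⟨t, ht⟩ | ⟨t, ht⟩))
    exacts [.inl ⟨t, ht⟩, .inl ⟨t, ht⟩, .inr ⟨t, ht⟩, .inr ⟨_, ht⟩]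
  · rintro (⟨t, ht⟩ | ⟨t, ht⟩)
    exacts [.inl (.inl ⟨t, ht⟩), .inr (.inl ⟨t, ht⟩)]

lemma List.length_filter_ofFn {β : Type*} {n : ℕ} (g : Fin n → β) (p : β → Bool) :
    ((List.ofFn g).filter p).length = #{t | p (g t)} := by
  induction n with
  | zero => simp
  | succ n ih =>
    rw [List.ofFn_succ, List.filter_cons, card_filter, Fin.sum_univ_succ, ← card_filter,
      ← ih]
    split <;> simp [*, add_comm]

lemma degW_cycleWord (k : ℕ) (α i : Fin k → ℕ) : degW (cycleWord k α i) = k := by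
  simp [degW, cycleWord, List.length_filter_ofFn]

lemma capW_cycleWord (k : ℕ) (α i : Fin k → ℕ) :
    capW (cycleWord k α i) = #{t | α t = i (finRotate k t)} := by
  simp [capW, cycleWord, List.length_filter_ofFn]

lemma offDiagW_cycleWord (k : ℕ) (α i : Fin k → ℕ) :
    offDiagW (cycleWord k α i) = #{t | α t ≠ i (finRotate k t)} := by
  simp [offDiagW, cycleWord, List.length_filter_ofFn]

lemma capW_add_offDiagW_cycleWord (k : ℕ) (α i : Fin k → ℕ) :
    capW (cycleWord k α i) + offDiagW (cycleWord k α i) = degW (cycleWord k α i) := by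
  rw [capW_cycleWord, offDiagW_cycleWord, card_filter_add_card_filter_not, degW_cycleWord,
    card_univ, Fintype.card_fin]

lemma List.length_filter_flatten {β : Type*} (p : β → Bool) (cs : List (List β)) :
    (cs.flatten.filter p).length = (cs.map fun c => (c.filter p).length).sum := by
  simp only [← List.countP_eq_length_filter, List.countP_flatten]

open Fin.NatCast in
lemma Fin.cyclic_induction {n : ℕ} {P : Fin (n + 1) → Prop} {p₀ : Fin (n + 1)} (h₀ : P p₀)
    (step : ∀ p, P p → P (p + 1)) (q : Fin (n + 1)) : P q := by
  have key : ∀ j : ℕ, P (p₀ + (j : Fin (n + 1))) := by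
    intro j
    induction j with
    | zero => simpa using h₀
    | succ j ih => simpa [add_assoc] using step _ ih
  simpa using key (q - p₀).val

/-- Every value of a non-constant cyclic sequence is left at some position. -/
lemma card_image_le_card_jumps {β : Type*} [DecidableEq β] {k : ℕ} (f : Fin k → β)
    {p q : Fin k} (hpq : f p ≠ f q) :
    #(univ.image f) ≤ #{t | f t ≠ f (finRotate k t)} := by
  obtain ⟨n, rfl⟩ : ∃ n, k = n + 1 := Nat.exists_eq_succ_of_ne_zero p.pos.ne'
  apply card_le_card_of_surjOn f
  intro u hu
  obtain ⟨t₀, -, rfl⟩ := mem_image.1 hu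
  by_contra hstuck
  have hconst : ∀ t, f t = f t₀ :=
    Fin.cyclic_induction (P := fun t => f t = f t₀) rfl fun t ht => by
      by_contra hne
      exact hstuck ⟨t, by simp [finRotate_apply, ht, Ne.symm hne], ht⟩
  exact hpq ((hconst p).trans (hconst q).symm)

/-- After collapsing the old indices to one point (`none`), the closed walk `i₀, α₀, i₁, α₁, …`
stands still along every `x`-step, so it only moves along off-diagonal `∂`-steps. -/
lemma card_sdiff_le_card_offDiag {k : ℕ} (α i : Fin k → ℕ) (old : Finset ℕ)
    (hx : ∀ t, α t ≠ i t → α t ∈ old ∧ i t ∈ old)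
    (hcov : 2 ≤ #(univ.image α ∪ univ.image i)) :
    #((univ.image α ∪ univ.image i) \ old) ≤ #{t | α t ≠ i (finRotate k t)} := by
  set collapse : ℕ → Option ℕ := fun v => if v ∈ old then none else some v
  have collapse_eq_some {a v : ℕ} (h : collapse a = some v) : a = v := by
    simp only [collapse] at h; split_ifs at h; simpa using h
  have collapse_α (t : Fin k) : collapse (α t) = collapse (i t) := by
    by_cases h : α t = i t
    · rw [h]
    · simp [collapse, hx t h]
  have new_mem {v} (hv : v ∈ (univ.image α ∪ univ.image i) \ old) :
      ∃ t, collapse (i t) = some v := by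
    simp only [mem_sdiff, mem_union, mem_image, mem_univ, true_and] at hv
    obtain ⟨⟨t, rfl⟩ | ⟨t, rfl⟩, hvold⟩ := hv
    · exact ⟨t, by rw [← collapse_α]; simp [collapse, hvold]⟩
    · exact ⟨t, by simp [collapse, hvold]⟩
  by_cases hmove : ∃ p q, collapse (i p) ≠ collapse (i q)
  · obtain ⟨p, q, hpq⟩ := hmove
    calc #((univ.image α ∪ univ.image i) \ old)
        ≤ #(univ.image (collapse ∘ i)) := by
          refine card_le_card_of_injOn some (fun v hv => ?_) (Option.some_injective _).injOn
          obtain ⟨t, ht⟩ := new_mem hv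
          exact mem_image.2 ⟨t, mem_univ _, ht⟩
      _ ≤ #{t | collapse (i t) ≠ collapse (i (finRotate k t))} :=
          card_image_le_card_jumps (collapse ∘ i) hpq
      _ ≤ #{t | α t ≠ i (finRotate k t)} := by
          refine card_le_card (monotone_filter_right _ fun t _ hjump heq => hjump ?_)
          rw [← collapse_α, heq]
  · push Not at hmove
    suffices hempty : (univ.image α ∪ univ.image i) \ old = ∅ by simp [hempty]
    refine eq_empty_of_forall_notMem fun v hv => ?_
    obtain ⟨t₀, ht₀⟩ := new_mem hv
    have hall (t : Fin k) : α t = v ∧ i t = v :=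
      ⟨collapse_eq_some ((collapse_α t).trans ((hmove t t₀).trans ht₀)),
        collapse_eq_some ((hmove t t₀).trans ht₀)⟩
    have hsub : univ.image α ∪ univ.image i ⊆ {v} :=
      union_subset (image_subset_iff.2 fun t _ => mem_singleton.2 (hall t).1)
        (image_subset_iff.2 fun t _ => mem_singleton.2 (hall t).2)
    have := (card_le_card hsub).trans_eq (card_singleton v)
    omega

lemma XRegular.mem_of_append_cons {P Q : List MonLetter} {a b : ℕ}
    (hx : XRegular (P ++ (true, a, b) :: Q)) (hab : a ≠ b) : (false, a, b) ∈ P := by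
  have h := hx ⟨P.length, by simp⟩ (by simp) (by simpa using hab)
  simp only [List.get_eq_getElem, List.getElem_append_right le_rfl, Nat.sub_self,
    List.getElem_cons_zero, List.take_left' rfl] at h
  exact List.count_pos_iff.1 (Nat.zero_lt_of_lt h)

/-- By `x`-regularity, an off-diagonal `x`-factor of a cycle is preceded by a matching
`∂`-factor, which cannot lie in the cycle because its `x`-factors come first. -/
lemma XRegular.mem_indexSet_of_cycleWord {P Q : List MonLetter} {k : ℕ} {α i : Fin k → ℕ}
    (hx : XRegular (P ++ cycleWord k α i ++ Q)) (t : Fin k) (ht : α t ≠ i t) :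
    α t ∈ indexSet P ∧ i t ∈ indexSet P := by
  obtain ⟨L, R, hLR⟩ := List.append_of_mem
    (List.mem_ofFn.2 ⟨t, rfl⟩ : ((true, α t, i t) : MonLetter) ∈ List.ofFn fun s => (true, α s, i s))
  rw [cycleWord, hLR] at hx
  simp only [List.append_assoc, List.cons_append] at hx
  rw [← List.append_assoc] at hx
  have hmem := hx.mem_of_append_cons ht
  rcases List.mem_append.1 hmem with hP | hL
  · exact mem_indexSet_of_mem hP
  · have := List.mem_ofFn.1 (hLR ▸ List.mem_append_left _ hL)
    simp at this

lemma XRegular.card_indexSet_cycleWord_sdiff_le {P Q : List MonLetter} {k : ℕ}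
    {α i : Fin k → ℕ} (hx : XRegular (P ++ cycleWord k α i ++ Q))
    (hcov : 2 ≤ covW (cycleWord k α i)) :
    #(indexSet (cycleWord k α i) \ indexSet P) ≤ offDiagW (cycleWord k α i) := by
  rw [covW_eq_card_indexSet, indexSet_cycleWord] at hcov
  rw [indexSet_cycleWord, offDiagW_cycleWord]
  exact card_sdiff_le_card_offDiag α i _ (hx.mem_indexSet_of_cycleWord) hcov

lemma card_indexSet_flatten_le (N : List MonLetter → ℕ) (cs : List (List MonLetter))
    (h : ∀ A c B, cs = A ++ c :: B → #(indexSet c \ indexSet A.flatten) ≤ N c) :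
    #(indexSet cs.flatten) ≤ (cs.map N).sum := by
  induction cs using List.reverseRecOn with
  | nil => simp [indexSet]
  | append_singleton A c ih =>
    have hA := ih fun A' c' B' hA' => h A' c' (B' ++ [c]) (by simp [hA'])
    have hc := h A c [] rfl
    calc #(indexSet (A ++ [c]).flatten)
        = #(indexSet c \ indexSet A.flatten) + #(indexSet A.flatten) := by
          rw [card_sdiff_add_card, List.flatten_append, indexSet_append, union_comm]
          simp
      _ ≤ ((A ++ [c]).map N).sum := by simp; omega

theorem statement16 (m : ℕ) (k : Fin m → ℕ)
    (α i : (l : Fin m) → Fin (k l) → ℕ)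
    (hcov : ∀ l, 2 ≤ covW (cycleWord (k l) (α l) (i l)))
    (w : List MonLetter)
    (hw : w = (List.ofFn fun l => cycleWord (k l) (α l) (i l)).flatten)
    (hreg : DRegular w ∧ XRegular w) :
    capW w + covW w ≤ degW w := by
  set cs := List.ofFn fun l => cycleWord (k l) (α l) (i l)
  have hcovW : covW w ≤ (cs.map offDiagW).sum := by
    rw [hw, covW_eq_card_indexSet]
    refine card_indexSet_flatten_le offDiagW cs fun A c B hsplit => ?_
    obtain ⟨l, rfl⟩ := List.mem_ofFn.1 (hsplit ▸ List.mem_append_right A List.mem_cons_self)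
    have hx := hreg.2
    rw [hw, hsplit, List.flatten_append, List.flatten_cons, ← List.append_assoc] at hx
    exact hx.card_indexSet_cycleWord_sdiff_le (hcov l)
  have hcapW : capW w = (cs.map capW).sum := by
    simp only [hw, capW, List.length_filter_flatten]; rfl
  have hdegW : degW w = (cs.map degW).sum := by
    simp only [hw, degW, List.length_filter_flatten]; rfl
  have hcycle : ∀ c ∈ cs, capW c + offDiagW c = degW c := by
    intro c hc
    obtain ⟨l, rfl⟩ := List.mem_ofFn.1 hc
    exact capW_add_offDiagW_cycleWord _ _ _
  calc capW w + covW w ≤ (cs.map capW).sum + (cs.map offDiagW).sum := by omega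
    _ = degW w := by rw [← List.sum_map_add, List.map_congr_left hcycle, hdegW]
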